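/- arXiv:2205.03213 — 4 statements merged into one kernel-verified Lean document; each statement's English description precedes it below -/
import Mathlib

section
/- Let n ≥ 1 and let c : Fin n × Fin n → ℝ be an arbitrary cost function. Then there exists a permutation σ of Fin n such that the coupling γ defined by γ(i,j) = 1/n if j = σ(i) and γ(i,j) = 0 otherwise satisfies: for every coupling γ' of the uniform measures (i.e., every matrix γ' : Fin n → Fin n → ℝ with γ'(i,j) ≥ 0 for all i,j, ∑_j γ'(i,j) = 1/n for every i, and ∑_i γ'(i,j) = 1/n for every j), one has ∑_{i,j} c(i,j) γ(i,j) ≤ ∑_{i,j} c(i,j) γ'(i,j). In other words, the discrete Kantorovich problem between two uniform measures on n points has a solution induced by a bijection, hence also solving the Monge problem. -/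
/-!
Scaling a coupling of the two uniform measures on `n` points by `n` gives a doubly stochastic
matrix. By Birkhoff's theorem it is a convex combination of permutation matrices, and the
Kantorovich cost is linear, so its cost is a weighted average of costs of permutations and hence
at least the cost of a cheapest permutation.
-/

open Finset

namespace Matrix

variable {ι κ R : Type*} [Fintype ι] [Fintype κ]

def transportCost [CommSemiring R] (C : Matrix ι κ R) : Matrix ι κ R →ₗ[R] R where
  toFun M := ∑ i, ∑ j, C i j * M i j
  map_add' M N := by simp only [add_apply, mul_add, sum_add_distrib]
  map_smul' a M := by simp only [smul_apply, smul_eq_mul, mul_sum, RingHom.id_apply, mul_left_comm]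

theorem transportCost_apply [CommSemiring R] (C M : Matrix ι κ R) :
    transportCost C M = ∑ i, ∑ j, C i j * M i j :=
  rfl

theorem transportCost_permMatrix [DecidableEq ι] [CommSemiring R] (C : Matrix ι ι R)
    (σ : Equiv.Perm ι) : transportCost C (σ.permMatrix R) = ∑ i, C i (σ i) := by
  simp [transportCost_apply, Equiv.Perm.permMatrix]

theorem exists_perm_transportCost_le [DecidableEq ι] [Field R] [LinearOrder R]
    [IsStrictOrderedRing R] (C : Matrix ι ι R) :
    ∃ σ : Equiv.Perm ι, ∀ M ∈ doublyStochastic R ι, ∑ i, C i (σ i) ≤ transportCost C M := by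
  obtain ⟨σ, -, hσ⟩ := exists_min_image univ (fun σ : Equiv.Perm ι => ∑ i, C i (σ i))
    univ_nonempty
  refine ⟨σ, fun M hM => ?_⟩
  obtain ⟨w, hw0, hw1, rfl⟩ := exists_eq_sum_perm_of_mem_doublyStochastic hM
  calc ∑ i, C i (σ i) = ∑ τ, w τ * ∑ i, C i (σ i) := by rw [← sum_mul, hw1, one_mul]
    _ ≤ ∑ τ, w τ * ∑ i, C i (τ i) :=
      sum_le_sum fun τ _ => mul_le_mul_of_nonneg_left (hσ τ (mem_univ τ)) (hw0 τ)
    _ = transportCost C (∑ τ, w τ • τ.permMatrix R) := by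
      simp only [map_sum, map_smul, transportCost_permMatrix, smul_eq_mul]

end Matrix

open Matrix

/-- The discrete Kantorovich problem between two uniform measures on `n` points
has a solution induced by a bijection (a permutation), hence also solving the
Monge problem. -/
theorem kantorovich_uniform_square_has_permutation_solution
    (n : ℕ) (hn : 1 ≤ n) (c : Fin n × Fin n → ℝ) :
    ∃ σ : Equiv.Perm (Fin n),
      ∀ γ' : Fin n → Fin n → ℝ,
        (∀ i j, 0 ≤ γ' i j) →
        (∀ i, ∑ j, γ' i j = 1 / n) →
        (∀ j, ∑ i, γ' i j = 1 / n) →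
        ∑ i, ∑ j, c (i, j) * (if j = σ i then (1 : ℝ) / n else 0) ≤
          ∑ i, ∑ j, c (i, j) * γ' i j := by
  have hn_pos : (0 : ℝ) < n := by exact_mod_cast hn
  obtain ⟨σ, hσ⟩ := exists_perm_transportCost_le (of fun i j => c (i, j))
  refine ⟨σ, fun γ' hγ'_nonneg hγ'_row hγ'_col => ?_⟩
  have hscaled : (n : ℝ) • of γ' ∈ doublyStochastic ℝ (Fin n) := by
    refine mem_doublyStochastic_iff_sum.2
      ⟨fun i j => mul_nonneg hn_pos.le (hγ'_nonneg i j), fun i => ?_, fun j => ?_⟩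
    · simp only [Matrix.smul_apply, of_apply, smul_eq_mul, ← mul_sum, hγ'_row]; field_simp
    · simp only [Matrix.smul_apply, of_apply, smul_eq_mul, ← mul_sum, hγ'_col]; field_simp
  have hcost_σ : ∑ i, ∑ j, c (i, j) * (if j = σ i then (1 : ℝ) / n else 0)
      = 1 / n * ∑ i, c (i, σ i) := by
    simp only [mul_ite, mul_zero, sum_ite_eq', mem_univ, if_true, mul_sum]
    simp only [mul_comm]
  have hcost_γ' : ∑ i, ∑ j, c (i, j) * γ' i j
      = 1 / n * transportCost (of fun i j => c (i, j)) ((n : ℝ) • of γ') := by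
    rw [map_smul, smul_eq_mul, ← mul_assoc, one_div_mul_cancel hn_pos.ne', one_mul]
    rfl
  rw [hcost_σ, hcost_γ']
  exact mul_le_mul_of_nonneg_left (hσ _ hscaled) (by positivity)
end

section
/- Let n ≥ 1 and let c : Fin n × Fin n → ℝ be an arbitrary cost function. Then the minimum of the Kantorovich cost ∑_{i,j} c(i,j) γ(i,j) over all couplings γ of the uniform measures on n points (matrices γ : Fin n → Fin n → ℝ with γ(i,j) ≥ 0, all row sums equal to 1/n, and all column sums equal to 1/n) is equal to the minimum over all permutations σ of Fin n of the Monge cost (1/n) ∑_i c(i, σ(i)). -/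
/-- The minimum of the Kantorovich cost over all couplings of the uniform
measures on `n` points equals the minimum over all permutations of the Monge
cost `(1/n) ∑ i, c (i, σ i)`. -/
theorem kantorovich_eq_monge_uniform_square
    (n : ℕ) (hn : 1 ≤ n) (c : Fin n × Fin n → ℝ) :
    sInf {x : ℝ | ∃ γ : Fin n → Fin n → ℝ,
        (∀ i j, 0 ≤ γ i j) ∧
        (∀ i, ∑ j, γ i j = 1 / n) ∧
        (∀ j, ∑ i, γ i j = 1 / n) ∧
        x = ∑ i, ∑ j, c (i, j) * γ i j} =
      sInf {x : ℝ | ∃ σ : Equiv.Perm (Fin n),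
        x = (1 / n) * ∑ i, c (i, σ i)} := by
  have hn0 : (n : ℝ) ≠ 0 := by positivity
  set S : Set ℝ := {x : ℝ | ∃ γ : Fin n → Fin n → ℝ,
      (∀ i j, 0 ≤ γ i j) ∧
      (∀ i, ∑ j, γ i j = 1 / n) ∧
      (∀ j, ∑ i, γ i j = 1 / n) ∧
      x = ∑ i, ∑ j, c (i, j) * γ i j} with hS
  set P : Set ℝ := {x : ℝ | ∃ σ : Equiv.Perm (Fin n),
      x = (1 / n) * ∑ i, c (i, σ i)} with hP
  -- P is the range of a function on a finite type
  have hPrange : P = Set.range (fun σ : Equiv.Perm (Fin n) =>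
      (1 / n : ℝ) * ∑ i, c (i, σ i)) := by
    ext x; simp [hP, eq_comm, Set.range]
  have hPne : P.Nonempty := ⟨(1 / n : ℝ) * ∑ i, c (i, (1 : Equiv.Perm (Fin n)) i), ⟨1, rfl⟩⟩
  have hPfin : P.Finite := by rw [hPrange]; exact Set.finite_range _
  have hPbdd : BddBelow P := hPfin.bddBelow
  -- key lemma: every element of S is ≥ sInf P
  have key : ∀ x ∈ S, sInf P ≤ x := by
    rintro x ⟨γ, hpos, hrow, hcol, hx⟩
    set M : Matrix (Fin n) (Fin n) ℝ := fun i j => (n : ℝ) * γ i j with hM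
    have hMds : M ∈ doublyStochastic ℝ (Fin n) := by
      rw [mem_doublyStochastic_iff_sum]
      refine ⟨fun i j => mul_nonneg (Nat.cast_nonneg n) (hpos i j), fun i => ?_, fun j => ?_⟩
      · show ∑ j, (n : ℝ) * γ i j = 1
        rw [← Finset.mul_sum, hrow i]; field_simp
      · show ∑ i, (n : ℝ) * γ i j = 1
        rw [← Finset.mul_sum, hcol j]; field_simp
    obtain ⟨w, hw0, hw1, hwM⟩ := exists_eq_sum_perm_of_mem_doublyStochastic hMds
    have hMentry : ∀ i j, M i j = ∑ σ : Equiv.Perm (Fin n),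
        w σ * (if σ i = j then (1 : ℝ) else 0) := by
      intro i j
      have := congrFun (congrFun hwM i) j
      rw [← this]
      simp only [Matrix.sum_apply, Matrix.smul_apply, Equiv.Perm.permMatrix,
        PEquiv.toMatrix_apply, Equiv.toPEquiv_apply, Option.mem_def,
        Option.some.injEq, smul_eq_mul]
    have hγM : ∀ i j, γ i j = (1 / n : ℝ) * M i j := by
      intro i j; show γ i j = (1 / n : ℝ) * ((n : ℝ) * γ i j); field_simp
    have hterm : ∀ i j, c (i, j) * γ i j
        = ∑ σ : Equiv.Perm (Fin n),
            w σ * ((1 / n : ℝ) * (if σ i = j then c (i, σ i) else 0)) := by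
      intro i j
      rw [hγM i j, hMentry i j]; simp only [Finset.mul_sum]
      refine Finset.sum_congr rfl fun σ _ => ?_
      split_ifs with h
      · subst h; ring
      · ring
    have hxw : x = ∑ σ : Equiv.Perm (Fin n), w σ * ((1 / n : ℝ) * ∑ i, c (i, σ i)) := by
      rw [hx]
      simp_rw [hterm]
      have h1 : ∀ i : Fin n, (∑ j, ∑ σ : Equiv.Perm (Fin n),
            w σ * ((1 / n : ℝ) * (if σ i = j then c (i, σ i) else 0)))
          = ∑ σ : Equiv.Perm (Fin n), ∑ j,
            w σ * ((1 / n : ℝ) * (if σ i = j then c (i, σ i) else 0)) :=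
        fun i => Finset.sum_comm
      simp_rw [h1]
      rw [Finset.sum_comm]
      refine Finset.sum_congr rfl fun σ _ => ?_
      rw [Finset.mul_sum, Finset.mul_sum]
      refine Finset.sum_congr rfl fun i _ => ?_
      rw [Finset.sum_eq_single (σ i)]
      · simp
      · intro j _ hj; simp [Ne.symm hj]
      · simp
    rw [hxw]
    calc sInf P = ∑ σ : Equiv.Perm (Fin n), w σ * sInf P := by
          rw [← Finset.sum_mul, hw1, one_mul]
      _ ≤ ∑ σ : Equiv.Perm (Fin n), w σ * ((1 / n : ℝ) * ∑ i, c (i, σ i)) := by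
          apply Finset.sum_le_sum
          intro σ _
          exact mul_le_mul_of_nonneg_left (csInf_le hPbdd ⟨σ, rfl⟩) (hw0 σ)
  -- P ⊆ S
  have hPS : P ⊆ S := by
    rintro x ⟨σ, rfl⟩
    refine ⟨fun i j => if σ i = j then (1 / n : ℝ) else 0,
      fun i j => by positivity, fun i => by simp, fun j => ?_, ?_⟩
    · rw [Finset.sum_eq_single (σ.symm j)]
      · simp
      · intro i _ hi
        show (if σ i = j then (1 / n : ℝ) else 0) = 0
        rw [if_neg]
        intro h
        exact hi (by rw [← h, Equiv.symm_apply_apply])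
      · simp
    · rw [Finset.mul_sum]
      refine Finset.sum_congr rfl fun i _ => ?_
      rw [Finset.sum_eq_single (σ i)]
      · simp [mul_comm]
      · intro j _ hj; simp [Ne.symm hj]
      · simp
  have hSne : S.Nonempty := hPne.mono hPS
  have hSbdd : BddBelow S := ⟨sInf P, key⟩
  exact le_antisymm (csInf_le_csInf hSbdd hPne hPS) (le_csInf hSne key)
end

section
/- Let m, n ≥ 1 and let c : Fin m × Fin n → ℝ be an arbitrary cost function. Then there exists a coupling γ of the uniform measures (a matrix γ : Fin m → Fin n → ℝ with γ(i,j) ≥ 0 for all i,j, ∑_j γ(i,j) = 1/m for every i, and ∑_i γ(i,j) = 1/n for every j) such that: (1) γ minimizes the Kantorovich cost ∑_{i,j} c(i,j) γ(i,j) among all such couplings; (2) for every i, the number of indices j with γ(i,j) ≠ 0 is at most n/gcd(m,n); and (3) for every j, the number of indices i with γ(i,j) ≠ 0 is at most m/gcd(m,n). -/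
/-!
Split each of the `m` source points into `b = n / gcd m n` copies and each of the `n` target
points into `a = m / gcd m n` copies, so that both sides have `m b = n a` points of equal mass.
Spreading a uniform coupling evenly over the copies turns it into a doubly stochastic matrix whose
pairing with the lifted cost is proportional to the Kantorovich cost; by Birkhoff's theorem this
linear functional is minimised at a permutation matrix. Collapsing an optimal permutation of the
copies gives an optimal coupling in which a source point sends mass only to the images of its `b`
copies, and a target point receives mass only from the preimages of its `a` copies.
-/

open Finset

section Birkhoff

variable {ι : Type*} [Fintype ι] [DecidableEq ι]

lemma sum_mul_permMatrix {R : Type*} [NonAssocSemiring R] (C : Matrix ι ι R)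
    (σ : Equiv.Perm ι) : ∑ p, ∑ q, C p q * σ.permMatrix R p q = ∑ p, C p (σ p) := by
  simp [Equiv.Perm.permMatrix, PEquiv.toMatrix_apply, eq_comm]

lemma exists_perm_sum_le_of_mem_doublyStochastic (C : Matrix ι ι ℝ) :
    ∃ σ : Equiv.Perm ι, ∀ M ∈ doublyStochastic ℝ ι,
      ∑ p, C p (σ p) ≤ ∑ p, ∑ q, C p q * M p q := by
  let pairing : Matrix ι ι ℝ →ₗ[ℝ] ℝ :=
    { toFun := fun M => ∑ p, ∑ q, C p q * M p q
      map_add' := fun M N => by simp only [Matrix.add_apply, mul_add, sum_add_distrib]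
      map_smul' := fun r M => by
        simp only [Matrix.smul_apply, smul_eq_mul, mul_sum, RingHom.id_apply, mul_left_comm] }
  obtain ⟨σ, -, hσ⟩ :=
    exists_min_image univ (fun σ : Equiv.Perm ι => ∑ p, C p (σ p)) univ_nonempty
  refine ⟨σ, fun M hM => ?_⟩
  rw [← SetLike.mem_coe, doublyStochastic_eq_convexHull_permMatrix] at hM
  obtain ⟨_, ⟨τ, rfl⟩, hτ⟩ :=
    (pairing.concaveOn convex_univ).exists_le_of_mem_convexHull (Set.subset_univ _) hM
  calc ∑ p, C p (σ p) ≤ ∑ p, C p (τ p) := hσ τ (mem_univ τ)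
    _ = pairing (τ.permMatrix ℝ) := (sum_mul_permMatrix C τ).symm
    _ ≤ pairing M := hτ

end Birkhoff

section Coupling

variable {X Y A B : Type*} [Fintype X] [Fintype Y] [Fintype A]

structure IsUniformCoupling (γ : X → Y → ℝ) : Prop where
  nonneg : ∀ i j, 0 ≤ γ i j
  sum_row : ∀ i, ∑ j, γ i j = 1 / Fintype.card X
  sum_col : ∀ j, ∑ i, γ i j = 1 / Fintype.card Y

def kantorovichCost (c : X × Y → ℝ) (γ : X → Y → ℝ) : ℝ :=
  ∑ i, ∑ j, c (i, j) * γ i j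

lemma card_filter_fst_eq [DecidableEq X] (i : X) : #{p : X × A | p.1 = i} = Fintype.card A := by
  rw [card_filter, Fintype.sum_prod_type]
  simp [apply_ite]

lemma sum_comp_fst {R : Type*} [NonAssocSemiring R] (f : X → R) :
    ∑ p : X × A, f p.1 = Fintype.card A * ∑ i, f i := by
  simp [Fintype.sum_prod_type, mul_sum]

lemma card_mul_card_eq [Fintype B] (τ : X × A ≃ Y × B) :
    (Fintype.card X * Fintype.card A : ℝ) = Fintype.card Y * Fintype.card B := by
  rw [← Nat.cast_mul, ← Nat.cast_mul, ← Fintype.card_prod, ← Fintype.card_prod,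
    Fintype.card_congr τ]

section Transport

variable [DecidableEq X] [DecidableEq Y]

def transportCount (τ : X × A ≃ Y × B) (i : X) (j : Y) : ℕ := #{p | p.1 = i ∧ (τ p).1 = j}

lemma transportCount_symm [Fintype B] (τ : X × A ≃ Y × B) (i : X) (j : Y) :
    transportCount τ.symm j i = transportCount τ i j :=
  card_equiv τ.symm (by simp [and_comm])

lemma sum_transportCount (τ : X × A ≃ Y × B) (i : X) :
    ∑ j, transportCount τ i j = Fintype.card A := by
  rw [← card_filter_fst_eq i,
    card_eq_sum_card_fiberwise (f := fun p => (τ p).1) (t := univ) (by simp)]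
  simp [transportCount, filter_filter]

lemma card_transportCount_ne_zero_le (τ : X × A ≃ Y × B) (i : X) :
    #{j | transportCount τ i j ≠ 0} ≤ Fintype.card A := by
  rw [← card_filter_fst_eq i]
  refine card_le_card_of_surjOn (fun p => (τ p).1) fun j hj => ?_
  simpa [transportCount, Finset.Nonempty, ← card_pos, Nat.pos_iff_ne_zero] using hj

lemma sum_mul_transportCount (τ : X × A ≃ Y × B) (c : X × Y → ℝ) :
    ∑ i, ∑ j, c (i, j) * transportCount τ i j = ∑ p, c (p.1, (τ p).1) := by
  rw [← sum_fiberwise univ (fun p => (p.1, (τ p).1)), Fintype.sum_prod_type]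
  refine sum_congr rfl fun i _ => sum_congr rfl fun j _ => ?_
  rw [sum_congr rfl fun p hp => congrArg c (mem_filter.1 hp).2, sum_const, nsmul_eq_mul,
    mul_comm]
  simp [transportCount, Prod.ext_iff]

noncomputable def transportPlan (τ : X × A ≃ Y × B) (i : X) (j : Y) : ℝ :=
  transportCount τ i j / (Fintype.card X * Fintype.card A)

lemma transportPlan_symm [Fintype B] (τ : X × A ≃ Y × B) (i : X) (j : Y) :
    transportPlan τ.symm j i = transportPlan τ i j := by
  rw [transportPlan, transportPlan, transportCount_symm, card_mul_card_eq τ]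

lemma sum_transportPlan [Nonempty A] (τ : X × A ≃ Y × B) (i : X) :
    ∑ j, transportPlan τ i j = 1 / Fintype.card X := by
  have : (Fintype.card A : ℝ) ≠ 0 := by positivity
  simp only [transportPlan, ← sum_div, ← Nat.cast_sum, sum_transportCount]
  field_simp

lemma isUniformCoupling_transportPlan [Fintype B] [Nonempty A] [Nonempty B]
    (τ : X × A ≃ Y × B) : IsUniformCoupling (transportPlan τ) where
  nonneg i j := by unfold transportPlan; positivity
  sum_row := sum_transportPlan τ
  sum_col j := by simpa only [transportPlan_symm] using sum_transportPlan τ.symm j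

lemma card_transportPlan_ne_zero_le (τ : X × A ≃ Y × B) (i : X) :
    #{j | transportPlan τ i j ≠ 0} ≤ Fintype.card A :=
  (card_le_card (monotone_filter_right _ fun j _ h h0 => h (by simp [transportPlan, h0]))).trans
    (card_transportCount_ne_zero_le τ i)

lemma kantorovichCost_transportPlan (τ : X × A ≃ Y × B) (c : X × Y → ℝ) :
    kantorovichCost c (transportPlan τ) =
      (∑ p, c (p.1, (τ p).1)) / (Fintype.card X * Fintype.card A) := by
  simp only [kantorovichCost, transportPlan, ← sum_mul_transportCount τ c, sum_div,
    mul_div_assoc]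

end Transport

lemma sum_comp_equiv_fst {R : Type*} [NonAssocSemiring R] [Fintype B] (e : X × A ≃ Y × B)
    (f : Y → R) :
    ∑ q, f (e q).1 = Fintype.card B * ∑ j, f j :=
  (e.sum_comp fun y => f y.1).trans (sum_comp_fst f)

noncomputable def liftCoupling [Fintype B] (e : X × A ≃ Y × B) (γ : X → Y → ℝ) :
    Matrix (X × A) (X × A) ℝ :=
  fun p q => Fintype.card X / Fintype.card B * γ p.1 (e q).1

lemma liftCoupling_mem_doublyStochastic [Fintype B] [DecidableEq X] [DecidableEq A]
    (e : X × A ≃ Y × B) {γ : X → Y → ℝ} (hγ : IsUniformCoupling γ) :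
    liftCoupling e γ ∈ doublyStochastic ℝ (X × A) := by
  rw [mem_doublyStochastic_iff_sum]
  refine ⟨fun p q => mul_nonneg (by positivity) (hγ.nonneg _ _), fun p => ?_, fun q => ?_⟩
  · have : Nonempty X := ⟨p.1⟩
    have : Nonempty B := ⟨(e p).2⟩
    simp only [liftCoupling, ← mul_sum, sum_comp_equiv_fst e (γ p.1), hγ.sum_row]
    field_simp
  · have : Nonempty Y := ⟨(e q).1⟩
    have : Nonempty B := ⟨(e q).2⟩
    simp only [liftCoupling]
    rw [← mul_sum, sum_comp_fst (fun i => γ i (e q).1), hγ.sum_col, div_mul_eq_mul_div,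
      ← mul_assoc, card_mul_card_eq e]
    field_simp

lemma sum_mul_liftCoupling [Fintype B] [Nonempty B] (e : X × A ≃ Y × B) (c : X × Y → ℝ)
    (γ : X → Y → ℝ) :
    ∑ p, ∑ q, c (p.1, (e q).1) * liftCoupling e γ p q =
      Fintype.card X * Fintype.card A * kantorovichCost c γ := by
  set K : ℝ := Fintype.card X / Fintype.card B
  have hK : K * Fintype.card B = Fintype.card X := div_mul_cancel₀ _ (by positivity)
  calc ∑ p, ∑ q, c (p.1, (e q).1) * (K * γ p.1 (e q).1)
      = ∑ p : X × A, Fintype.card B * ∑ j, c (p.1, j) * (K * γ p.1 j) :=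
        sum_congr rfl fun p _ => sum_comp_equiv_fst e fun j => c (p.1, j) * (K * γ p.1 j)
    _ = Fintype.card A * ∑ i, Fintype.card B * ∑ j, c (i, j) * (K * γ i j) :=
        sum_comp_fst fun i => Fintype.card B * ∑ j, c (i, j) * (K * γ i j)
    _ = Fintype.card X * Fintype.card A * kantorovichCost c γ := by
        simp only [kantorovichCost, mul_sum, ← hK]
        exact sum_congr rfl fun i _ => sum_congr rfl fun j _ => by ring

theorem exists_optimal_sparse_isUniformCoupling [DecidableEq X] [DecidableEq Y] [DecidableEq A]
    [Fintype B] [Nonempty A] [Nonempty B] (e : X × A ≃ Y × B) (c : X × Y → ℝ) :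
    ∃ γ : X → Y → ℝ, IsUniformCoupling γ ∧
      (∀ γ', IsUniformCoupling γ' → kantorovichCost c γ ≤ kantorovichCost c γ') ∧
      (∀ i, #{j | γ i j ≠ 0} ≤ Fintype.card A) ∧
      (∀ j, #{i | γ i j ≠ 0} ≤ Fintype.card B) := by
  obtain ⟨σ, hσ⟩ := exists_perm_sum_le_of_mem_doublyStochastic fun p q => c (p.1, (e q).1)
  refine ⟨transportPlan (σ.trans e), isUniformCoupling_transportPlan _, fun γ' hγ' => ?_,
    card_transportPlan_ne_zero_le _, fun j => ?_⟩
  · rcases isEmpty_or_nonempty X with hX | hX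
    · simp [kantorovichCost]
    rw [kantorovichCost_transportPlan, div_le_iff₀ (by positivity), mul_comm,
      ← sum_mul_liftCoupling e]
    exact hσ _ (liftCoupling_mem_doublyStochastic e hγ')
  · simpa only [transportPlan_symm] using card_transportPlan_ne_zero_le (σ.trans e).symm j

end Coupling

/-- There is an optimal coupling of the uniform measures on `m` and `n` points
such that each row has at most `n / gcd(m,n)` nonzero entries and each column
has at most `m / gcd(m,n)` nonzero entries. -/
theorem kantorovich_sparse_solution
    (m n : ℕ) (hm : 1 ≤ m) (hn : 1 ≤ n) (c : Fin m × Fin n → ℝ) :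
    ∃ γ : Fin m → Fin n → ℝ,
      (∀ i j, 0 ≤ γ i j) ∧
      (∀ i, ∑ j, γ i j = 1 / m) ∧
      (∀ j, ∑ i, γ i j = 1 / n) ∧
      (∀ γ' : Fin m → Fin n → ℝ,
        (∀ i j, 0 ≤ γ' i j) →
        (∀ i, ∑ j, γ' i j = 1 / m) →
        (∀ j, ∑ i, γ' i j = 1 / n) →
        ∑ i, ∑ j, c (i, j) * γ i j ≤ ∑ i, ∑ j, c (i, j) * γ' i j) ∧
      (∀ i, (Finset.univ.filter fun j => γ i j ≠ 0).card ≤ n / Nat.gcd m n) ∧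
      (∀ j, (Finset.univ.filter fun i => γ i j ≠ 0).card ≤ m / Nat.gcd m n) := by
  have hg : 0 < Nat.gcd m n := Nat.gcd_pos_of_pos_left n hm
  have : NeZero (n / Nat.gcd m n) := ⟨(Nat.div_pos (Nat.gcd_le_right m hn) hg).ne'⟩
  have : NeZero (m / Nat.gcd m n) := ⟨(Nat.div_pos (Nat.gcd_le_left n hm) hg).ne'⟩
  have hsize : m * (n / Nat.gcd m n) = n * (m / Nat.gcd m n) := by
    rw [← Nat.mul_div_assoc _ (Nat.gcd_dvd_right m n),
      ← Nat.mul_div_assoc _ (Nat.gcd_dvd_left m n), mul_comm]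
  obtain ⟨γ, hγ, hopt, hrow, hcol⟩ := exists_optimal_sparse_isUniformCoupling
    (finProdFinEquiv.trans ((finCongr hsize).trans finProdFinEquiv.symm)) c
  simp only [Fintype.card_fin] at hrow hcol
  refine ⟨γ, hγ.nonneg, by simpa using hγ.sum_row, by simpa using hγ.sum_col,
    fun γ' h0 hr hc => hopt γ' ⟨h0, by simpa using hr, by simpa using hc⟩, hrow, hcol⟩
end

section
/- Let m, n ≥ 1, let p : Fin m → ℚ and q : Fin n → ℚ be probability vectors with strictly positive rational entries (p(i) > 0 for all i, q(j) > 0 for all j, ∑_i p(i) = 1, ∑_j q(j) = 1). Let B be the least common multiple of the denominators of the p(i) and let D be the least common multiple of the denominators of the q(j). Let c : Fin m × Fin n → ℝ be an arbitrary cost function. Then there exists a coupling γ of p and q (a matrix γ : Fin m → Fin n → ℝ with γ(i,j) ≥ 0 for all i,j, ∑_j γ(i,j) = p(i) for every i, and ∑_i γ(i,j) = q(j) for every j) such that γ minimizes the Kantorovich cost ∑_{i,j} c(i,j) γ(i,j) among all such couplings and every entry of γ is an integer multiple of 1/lcm(B,D), i.e., for every (i,j) there exists a natural number k with γ(i,j)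 = k/lcm(B,D). -/
/-!
Scaling by `L = lcm B D` turns `p` and `q` into integer vectors `a`, `b` with
`∑ a = ∑ b = L`. Cut `Fin L` into blocks of sizes `a i` and, independently, into blocks of
sizes `b j`. A permutation `σ` of `Fin L` induces an integer coupling of `a` and `b` (count the
`x` in block `i` with `σ x` in block `j`), and conversely a real coupling of `a` and `b`, spread
uniformly over the blocks, is a doubly stochastic `L × L` matrix of the same cost. By Birkhoff's
theorem the cost of a doubly stochastic matrix is at least that of some permutation, so a
cost-minimising permutation gives an optimal coupling with entries in `(1/L) ℕ`.
-/

open Finset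

section Fibers

variable {α β : Type*} [Fintype α] [DecidableEq β]

theorem card_fiber_comp_perm (f : α → β) (σ : Equiv.Perm α) (b : β) :
    #{x | f (σ x) = b} = #{x | f x = b} :=
  card_equiv σ (by simp)

variable [Fintype β]

theorem sum_comp_eq_sum_card_fiber_nsmul {M : Type*} [AddCommMonoid M] (f : α → β)
    (g : β → M) :
    ∑ x, g (f x) = ∑ b, #{x | f x = b} • g b := by
  simp only [← Finset.sum_fiberwise' univ f g, sum_const]

theorem sum_comp_eq_sum_mul_of_card_fiber {a : β → ℕ} {f : α → β}
    (hf : ∀ b, #{x | f x = b} = a b) (g : β → ℝ) :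
    ∑ x, g (f x) = ∑ b, (a b : ℝ) * g b := by
  simp only [sum_comp_eq_sum_card_fiber_nsmul f g, hf, nsmul_eq_mul]

theorem exists_fin_card_fiber_eq (a : β → ℕ) {L : ℕ} (hL : ∑ b, a b = L) :
    ∃ f : Fin L → β, ∀ b, #{x | f x = b} = a b := by
  subst hL
  let e := Fintype.equivFinOfCardEq (by simp : Fintype.card (Σ b, Fin (a b)) = ∑ b, a b)
  refine ⟨fun x => (e.symm x).1, fun b => ?_⟩
  rw [← Fintype.card_subtype, Fintype.card_congr (e.symm.subtypeEquiv
    (p := fun x => (e.symm x).1 = b) (q := fun y => y.1 = b) fun _ => Iff.rfl),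
    Fintype.card_congr (Equiv.sigmaSubtype b)]
  simp

end Fibers

theorem Matrix.le_sum_mul_of_mem_doublyStochastic {R n : Type*} [Fintype n] [DecidableEq n]
    [Field R] [LinearOrder R] [IsStrictOrderedRing R] {C M : Matrix n n R}
    (hM : M ∈ doublyStochastic R n) {v : R} (hv : ∀ σ : Equiv.Perm n, v ≤ ∑ i, C i (σ i)) :
    v ≤ ∑ i, ∑ j, C i j * M i j := by
  have hlin : IsLinearMap R fun W : Matrix n n R => ∑ i, ∑ j, C i j * W i j := by
    constructor <;> intros <;>
      simp [mul_add, sum_add_distrib, mul_sum, mul_left_comm]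
  rw [← SetLike.mem_coe, doublyStochastic_eq_convexHull_permMatrix] at hM
  refine convexHull_min ?_ (convex_halfSpace_ge hlin v) hM
  rintro _ ⟨σ, rfl⟩
  simpa [Equiv.Perm.permMatrix, PEquiv.toMatrix_apply] using hv σ

section Coupling

variable {ι κ α : Type*} [Fintype ι] [Fintype κ] [Fintype α]

def IsCoupling (μ : ι → ℝ) (ν : κ → ℝ) (γ : ι → κ → ℝ) : Prop :=
  (∀ i j, 0 ≤ γ i j) ∧ (∀ i, ∑ j, γ i j = μ i) ∧ ∀ j, ∑ i, γ i j = ν j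

def transportCost (c : ι × κ → ℝ) (γ : ι → κ → ℝ) : ℝ :=
  ∑ i, ∑ j, c (i, j) * γ i j

theorem IsCoupling.const_mul {μ : ι → ℝ} {ν : κ → ℝ} {γ : ι → κ → ℝ} (h : IsCoupling μ ν γ)
    {t : ℝ} (ht : 0 ≤ t) :
    IsCoupling (fun i => t * μ i) (fun j => t * ν j) (fun i j => t * γ i j) := by
  obtain ⟨h0, hrow, hcol⟩ := h
  exact ⟨fun i j => mul_nonneg ht (h0 i j), fun i => by rw [← mul_sum, hrow],
    fun j => by rw [← mul_sum, hcol]⟩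

theorem transportCost_const_mul (c : ι × κ → ℝ) (γ : ι → κ → ℝ) (t : ℝ) :
    transportCost c (fun i j => t * γ i j) = t * transportCost c γ := by
  simp only [transportCost, mul_sum, mul_left_comm]

variable [DecidableEq ι] [DecidableEq κ]

theorem transportCost_card_fiber (c : ι × κ → ℝ) (r : α → ι) (s : α → κ) :
    transportCost c (fun i j => (#{x | (r x, s x) = (i, j)} : ℝ)) = ∑ x, c (r x, s x) := by
  rw [sum_comp_eq_sum_card_fiber_nsmul (fun x => (r x, s x)) c, Fintype.sum_prod_type]
  simp only [transportCost, nsmul_eq_mul, mul_comm]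

theorem isCoupling_card_fiber {a : ι → ℕ} {b : κ → ℕ} {r : α → ι} {s : α → κ}
    (hr : ∀ i, #{x | r x = i} = a i) (hs : ∀ j, #{x | s x = j} = b j) :
    IsCoupling (fun i => (a i : ℝ)) (fun j => (b j : ℝ))
      (fun i j => (#{x | (r x, s x) = (i, j)} : ℝ)) := by
  refine ⟨fun i j => Nat.cast_nonneg _, fun i => ?_, fun j => ?_⟩
  · dsimp only
    rw [← hr, card_eq_sum_card_fiberwise (f := s) (t := univ) fun _ _ => mem_univ _]
    push_cast
    simp only [filter_filter, Prod.mk.injEq]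
  · dsimp only
    rw [← hs, card_eq_sum_card_fiberwise (f := r) (t := univ) fun _ _ => mem_univ _]
    push_cast
    simp only [filter_filter, Prod.mk.injEq, and_comm]

/-- The matrix spreading the mass `Γ i j` uniformly over the block `r⁻¹ i × s⁻¹ j`. -/
noncomputable def spreadOverFibers (a : ι → ℕ) (b : κ → ℕ) (r : α → ι) (s : α → κ)
    (Γ : ι → κ → ℝ) : Matrix α α ℝ :=
  fun x y => Γ (r x) (s y) / (a (r x) * b (s y))

variable {a : ι → ℕ} {b : κ → ℕ} {r : α → ι} {s : α → κ}

theorem sum_mul_spreadOverFibers (ha : ∀ i, 0 < a i) (hb : ∀ j, 0 < b j)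
    (hr : ∀ i, #{x | r x = i} = a i) (hs : ∀ j, #{x | s x = j} = b j) (c : ι × κ → ℝ)
    (Γ : ι → κ → ℝ) :
    ∑ x, ∑ y, c (r x, s y) * spreadOverFibers a b r s Γ x y = transportCost c Γ := by
  let g i j := c (i, j) * (Γ i j / (a i * b j))
  calc ∑ x, ∑ y, c (r x, s y) * spreadOverFibers a b r s Γ x y
      = ∑ x, ∑ j, (b j : ℝ) * g (r x) j :=
        sum_congr rfl fun x _ => sum_comp_eq_sum_mul_of_card_fiber hs (g (r x))
    _ = ∑ i, (a i : ℝ) * ∑ j, (b j : ℝ) * g i j :=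
        sum_comp_eq_sum_mul_of_card_fiber hr fun i => ∑ j, (b j : ℝ) * g i j
    _ = transportCost c Γ := by
        refine sum_congr rfl fun i _ => ?_
        rw [mul_sum]
        refine sum_congr rfl fun j _ => ?_
        have ha0 : (a i : ℝ) ≠ 0 := (Nat.cast_pos.2 (ha i)).ne'
        have hb0 : (b j : ℝ) ≠ 0 := (Nat.cast_pos.2 (hb j)).ne'
        simp only [g]
        field_simp

variable [DecidableEq α]

theorem spreadOverFibers_mem_doublyStochastic (ha : ∀ i, 0 < a i) (hb : ∀ j, 0 < b j)
    (hr : ∀ i, #{x | r x = i} = a i) (hs : ∀ j, #{x | s x = j} = b j) {Γ : ι → κ → ℝ}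
    (hΓ : IsCoupling (fun i => (a i : ℝ)) (fun j => (b j : ℝ)) Γ) :
    spreadOverFibers a b r s Γ ∈ doublyStochastic ℝ α := by
  obtain ⟨h0, hrow, hcol⟩ := hΓ
  refine mem_doublyStochastic_iff_sum.2 ⟨fun x y => div_nonneg (h0 _ _) (by positivity),
    fun x => ?_, fun y => ?_⟩
  · have ha0 : (a (r x) : ℝ) ≠ 0 := (Nat.cast_pos.2 (ha (r x))).ne'
    calc ∑ y, spreadOverFibers a b r s Γ x y
        = ∑ j, (b j : ℝ) * (Γ (r x) j / (a (r x) * b j)) :=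
          sum_comp_eq_sum_mul_of_card_fiber hs fun j => Γ (r x) j / (a (r x) * b j)
      _ = (∑ j, Γ (r x) j) / a (r x) := by
          rw [sum_div]
          refine sum_congr rfl fun j _ => ?_
          have hb0 : (b j : ℝ) ≠ 0 := (Nat.cast_pos.2 (hb j)).ne'
          field_simp
      _ = 1 := by rw [hrow, div_self ha0]
  · have hb0 : (b (s y) : ℝ) ≠ 0 := (Nat.cast_pos.2 (hb (s y))).ne'
    calc ∑ x, spreadOverFibers a b r s Γ x y
        = ∑ i, (a i : ℝ) * (Γ i (s y) / (a i * b (s y))) :=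
          sum_comp_eq_sum_mul_of_card_fiber hr fun i => Γ i (s y) / (a i * b (s y))
      _ = (∑ i, Γ i (s y)) / b (s y) := by
          rw [sum_div]
          refine sum_congr rfl fun i _ => ?_
          have ha0 : (a i : ℝ) ≠ 0 := (Nat.cast_pos.2 (ha i)).ne'
          field_simp
      _ = 1 := by rw [hcol, div_self hb0]

end Coupling

theorem exists_nat_coupling_transportCost_le {ι κ : Type*} [Fintype ι] [Fintype κ]
    (a : ι → ℕ) (b : κ → ℕ) (ha : ∀ i, 0 < a i) (hb : ∀ j, 0 < b j)
    (hab : ∑ i, a i = ∑ j, b j) (c : ι × κ → ℝ) :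
    ∃ N : ι → κ → ℕ,
      IsCoupling (fun i => (a i : ℝ)) (fun j => (b j : ℝ)) (fun i j => (N i j : ℝ)) ∧
      ∀ Γ, IsCoupling (fun i => (a i : ℝ)) (fun j => (b j : ℝ)) Γ →
        transportCost c (fun i j => (N i j : ℝ)) ≤ transportCost c Γ := by
  classical
  obtain ⟨r, hr⟩ := exists_fin_card_fiber_eq a rfl
  obtain ⟨s, hs⟩ := exists_fin_card_fiber_eq b hab.symm
  obtain ⟨σ, -, hσ⟩ := exists_min_image univ
    (fun σ : Equiv.Perm (Fin (∑ i, a i)) => ∑ x, c (r x, s (σ x))) univ_nonempty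
  have hsσ (j) : #{x | s (σ x) = j} = b j := (card_fiber_comp_perm s σ j).trans (hs j)
  refine ⟨fun i j => #{x | (r x, s (σ x)) = (i, j)}, isCoupling_card_fiber hr hsσ,
    fun Γ hΓ => ?_⟩
  calc transportCost c (fun i j => (#{x | (r x, s (σ x)) = (i, j)} : ℝ))
      = ∑ x, c (r x, s (σ x)) := transportCost_card_fiber c r (s ∘ σ)
    _ ≤ ∑ x, ∑ y, c (r x, s y) * spreadOverFibers a b r s Γ x y :=
        Matrix.le_sum_mul_of_mem_doublyStochastic
          (spreadOverFibers_mem_doublyStochastic ha hb hr hs hΓ) fun τ => hσ τ (mem_univ τ)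
    _ = transportCost c Γ := sum_mul_spreadOverFibers ha hb hr hs c Γ

theorem Rat.exists_pos_natCast_eq_mul_of_den_dvd {K : Type*} [DivisionRing K] [CharZero K]
    {x : ℚ} (hx : 0 < x) {L : ℕ} (hL : 0 < L) (h : x.den ∣ L) :
    ∃ k : ℕ, 0 < k ∧ (k : K) = L * x := by
  obtain ⟨d, rfl⟩ := h
  have hnum : ((x.num.toNat : ℕ) : ℚ) = x.num := by
    exact_mod_cast Int.toNat_of_nonneg (Rat.num_nonneg.2 hx.le)
  refine ⟨x.num.toNat * d,
    Nat.mul_pos (by simpa using Rat.num_pos.2 hx) (Nat.pos_of_mul_pos_left hL), ?_⟩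
  have hk : ((x.num.toNat * d : ℕ) : ℚ) = (x.den * d : ℕ) * x := by
    rw [Nat.cast_mul, hnum, ← Rat.mul_den_eq_num, Nat.cast_mul]
    ring
  exact_mod_cast hk

theorem kantorovich_quantized_solution_rational_general
    (m n : ℕ)
    (p : Fin m → ℚ) (q : Fin n → ℚ)
    (hp : ∀ i, 0 < p i) (hq : ∀ j, 0 < q j)
    (hps : ∑ i, p i = 1) (hqs : ∑ j, q j = 1)
    (B D : ℕ)
    (hB : B = Finset.univ.lcm fun i => (p i).den)
    (hD : D = Finset.univ.lcm fun j => (q j).den)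
    (c : Fin m × Fin n → ℝ) :
    ∃ γ : Fin m → Fin n → ℝ,
      (∀ i j, 0 ≤ γ i j) ∧
      (∀ i, ∑ j, γ i j = (p i : ℝ)) ∧
      (∀ j, ∑ i, γ i j = (q j : ℝ)) ∧
      (∀ γ' : Fin m → Fin n → ℝ,
        (∀ i j, 0 ≤ γ' i j) →
        (∀ i, ∑ j, γ' i j = (p i : ℝ)) →
        (∀ j, ∑ i, γ' i j = (q j : ℝ)) →
        ∑ i, ∑ j, c (i, j) * γ i j ≤ ∑ i, ∑ j, c (i, j) * γ' i j) ∧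
      (∀ i j, ∃ k : ℕ, γ i j = (k : ℝ) / (Nat.lcm B D : ℝ)) := by
  set L := Nat.lcm B D
  have hL : 0 < L := Nat.pos_of_ne_zero <| Nat.lcm_ne_zero
    (by simp [hB, Finset.lcm_eq_zero_iff]) (by simp [hD, Finset.lcm_eq_zero_iff])
  choose a ha_pos ha using fun i => Rat.exists_pos_natCast_eq_mul_of_den_dvd (K := ℝ) (hp i) hL
    ((hB ▸ Finset.dvd_lcm (mem_univ i)).trans (Nat.dvd_lcm_left B D))
  choose b hb_pos hb using fun j => Rat.exists_pos_natCast_eq_mul_of_den_dvd (K := ℝ) (hq j) hL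
    ((hD ▸ Finset.dvd_lcm (mem_univ j)).trans (Nat.dvd_lcm_right B D))
  have hab : ∑ i, a i = ∑ j, b j := by
    have hpqR : ∑ i, (p i : ℝ) = ∑ j, (q j : ℝ) := by exact_mod_cast hps.trans hqs.symm
    have habR : ∑ i, (a i : ℝ) = ∑ j, (b j : ℝ) := by simp only [ha, hb, ← mul_sum, hpqR]
    exact_mod_cast habR
  obtain ⟨N, hN, hN_le⟩ := exists_nat_coupling_transportCost_le a b ha_pos hb_pos hab c
  have hL0 : (L : ℝ) ≠ 0 := by positivity
  obtain ⟨h0, hrow, hcol⟩ : IsCoupling (fun i => (p i : ℝ)) (fun j => (q j : ℝ))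
      (fun i j => (L : ℝ)⁻¹ * N i j) := by
    simpa only [ha, hb, inv_mul_cancel_left₀ hL0] using
      hN.const_mul (inv_nonneg.2 L.cast_nonneg)
  refine ⟨_, h0, hrow, hcol, fun γ' h0' hrow' hcol' => ?_,
    fun i j => ⟨N i j, (div_eq_inv_mul _ _).symm⟩⟩
  have hΓ := IsCoupling.const_mul ⟨h0', hrow', hcol'⟩ L.cast_nonneg (t := L)
  simp only [← ha, ← hb] at hΓ
  have hcost := hN_le _ hΓ
  rw [transportCost_const_mul] at hcost
  show transportCost c _ ≤ transportCost c γ'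
  rwa [transportCost_const_mul, inv_mul_le_iff₀ (by positivity)]

/-- For probability vectors with positive rational entries, there is an optimal
coupling all of whose entries are integer multiples of `1 / lcm(B,D)`, where
`B` and `D` are the least common multiples of the denominators of the entries. -/
theorem kantorovich_quantized_solution_rational
    (m n : ℕ) (hm : 1 ≤ m) (hn : 1 ≤ n)
    (p : Fin m → ℚ) (q : Fin n → ℚ)
    (hp : ∀ i, 0 < p i) (hq : ∀ j, 0 < q j)
    (hps : ∑ i, p i = 1) (hqs : ∑ j, q j = 1)
    (B D : ℕ)
    (hB : B = Finset.univ.lcm fun i => (p i).den)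
    (hD : D = Finset.univ.lcm fun j => (q j).den)
    (c : Fin m × Fin n → ℝ) :
    ∃ γ : Fin m → Fin n → ℝ,
      (∀ i j, 0 ≤ γ i j) ∧
      (∀ i, ∑ j, γ i j = (p i : ℝ)) ∧
      (∀ j, ∑ i, γ i j = (q j : ℝ)) ∧
      (∀ γ' : Fin m → Fin n → ℝ,
        (∀ i j, 0 ≤ γ' i j) →
        (∀ i, ∑ j, γ' i j = (p i : ℝ)) →
        (∀ j, ∑ i, γ' i j = (q j : ℝ)) →
        ∑ i, ∑ j, c (i, j) * γ i j ≤ ∑ i, ∑ j, c (i, j) * γ' i j) ∧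
      (∀ i j, ∃ k : ℕ, γ i j = (k : ℝ) / (Nat.lcm B D : ℝ)) :=
  kantorovich_quantized_solution_rational_general m n p q hp hq hps hqs B D hB hD c
end
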